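/- arXiv:2605.20376 — 4 statements merged into one kernel-verified Lean document; each statement's English description precedes it below -/
import Mathlib

section
/- For every integer K ≥ 2, the set 𝒷𝒯_K of irrationals in (0,1) of type bounded by K is a Cantor set: it is a nonempty compact subset of ℝ that is perfect (has no isolated points) and totally disconnected (equivalently, has empty interior). -/
open Filter Set

/-- The Gauss map `x ↦ {1/x}`. -/
noncomputable def gaussMap (x : ℝ) : ℝ := Int.fract x⁻¹

/-- The `i`-th partial quotient `a_i` of the continued fraction
`α = [a_0, a_1, …] = 1/(a_0 + 1/(a_1 + ⋯))` of `α ∈ (0,1)`. -/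
noncomputable def partialQuot (α : ℝ) (i : ℕ) : ℕ := (⌊(gaussMap^[i] α)⁻¹⌋).toNat

/-- `α` is of type bounded by `K`: all partial quotients are at most `K`. -/
def BddType (K : ℕ) (α : ℝ) : Prop := ∀ i : ℕ, partialQuot α i ≤ K

/-- The set `𝒷𝒯_K` of irrationals in `(0,1)` of type bounded by `K`. -/
def BTSet (K : ℕ) : Set ℝ := {α : ℝ | α ∈ Set.Ioo (0:ℝ) 1 ∧ Irrational α ∧ BddType K α}

/- ### Auxiliary lemmas -/

lemma partialQuot_succ (α : ℝ) (i : ℕ) :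
    partialQuot α (i + 1) = partialQuot (gaussMap α) i := by
  simp [partialQuot, Function.iterate_succ_apply]

/-- Forward step of the Gauss map on irrationals in `(0,1)`. -/
lemma gauss_step {x : ℝ} (hx : x ∈ Set.Ioo (0:ℝ) 1) (hirr : Irrational x) :
    gaussMap x ∈ Set.Ioo (0:ℝ) 1 ∧ Irrational (gaussMap x) ∧
      1 ≤ partialQuot x 0 ∧ x = ((partialQuot x 0 : ℝ) + gaussMap x)⁻¹ := by
  obtain ⟨hx0, hx1⟩ := hx
  have hinv1 : 1 < x⁻¹ := (one_lt_inv₀ hx0).2 hx1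
  have hinvirr : Irrational x⁻¹ := hirr.inv
  have hfl1 : 1 ≤ ⌊x⁻¹⌋ := by
    exact_mod_cast Int.le_floor.2 (le_of_lt (by exact_mod_cast hinv1))
  have hfr0 : gaussMap x ≠ 0 := by
    intro h
    have : x⁻¹ = (⌊x⁻¹⌋ : ℝ) := by
      have := Int.fract_add_floor x⁻¹
      rw [gaussMap] at h
      linarith [this, h]
    exact hinvirr.ne_int ⌊x⁻¹⌋ this
  have hfr : gaussMap x ∈ Set.Ioo (0:ℝ) 1 :=
    ⟨lt_of_le_of_ne (Int.fract_nonneg _) (Ne.symm hfr0), Int.fract_lt_one _⟩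
  refine ⟨hfr, ?_, ?_, ?_⟩
  · exact (hinvirr.sub_intCast ⌊x⁻¹⌋)
  · simp only [partialQuot, Function.iterate_zero, id]
    omega
  · have h' : (⌊x⁻¹⌋.toNat : ℤ) = ⌊x⁻¹⌋ := Int.toNat_of_nonneg (by omega)
    have hcast : ((partialQuot x 0 : ℝ)) = (⌊x⁻¹⌋ : ℝ) := by
      simp only [partialQuot, Function.iterate_zero, id]
      exact_mod_cast h'
    rw [hcast, gaussMap, Int.floor_add_fract, inv_inv]

/-- Backward step: prepending a partial quotient. -/
lemma inv_step {a : ℕ} (ha : 1 ≤ a) {y : ℝ} (hy : y ∈ Set.Ioo (0:ℝ) 1)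
    (hirr : Irrational y) :
    ((a:ℝ) + y)⁻¹ ∈ Set.Ioo (0:ℝ) 1 ∧ Irrational ((a:ℝ) + y)⁻¹ ∧
      gaussMap ((a:ℝ) + y)⁻¹ = y ∧ partialQuot ((a:ℝ) + y)⁻¹ 0 = a := by
  obtain ⟨hy0, hy1⟩ := hy
  have ha1 : (1:ℝ) ≤ (a:ℝ) := by exact_mod_cast ha
  have hpos : (0:ℝ) < (a:ℝ) + y := by linarith
  have hgt1 : (1:ℝ) < (a:ℝ) + y := by linarith
  have hmem : ((a:ℝ) + y)⁻¹ ∈ Set.Ioo (0:ℝ) 1 :=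
    ⟨inv_pos.2 hpos, inv_lt_one_of_one_lt₀ hgt1⟩
  have hginv : (((a:ℝ) + y)⁻¹)⁻¹ = (a:ℝ) + y := inv_inv _
  have hfract : Int.fract ((a:ℝ) + y) = y := by
    have : ((a:ℝ)) = ((a:ℤ) : ℝ) := by push_cast; ring
    rw [this, Int.fract_intCast_add, Int.fract_eq_self.2 ⟨le_of_lt hy0, hy1⟩]
  have hfloor : ⌊(a:ℝ) + y⌋ = (a:ℤ) := by
    rw [Int.floor_natCast_add, Int.floor_eq_zero_iff.2 ⟨le_of_lt hy0, hy1⟩, add_zero]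
  refine ⟨hmem, ?_, ?_, ?_⟩
  · exact ((hirr.natCast_add a).inv)
  · rw [gaussMap, hginv, hfract]
  · simp only [partialQuot, Function.iterate_zero, id, hginv, hfloor, Int.toNat_natCast]

/-- Membership step: `BTSet` is invariant under the Gauss map. -/
lemma mem_step {K : ℕ} {α : ℝ} (hα : α ∈ BTSet K) :
    gaussMap α ∈ BTSet K ∧ 1 ≤ partialQuot α 0 ∧ partialQuot α 0 ≤ K ∧
      α = ((partialQuot α 0 : ℝ) + gaussMap α)⁻¹ := by
  obtain ⟨hmem, hirr, hbdd⟩ := hα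
  obtain ⟨h1, h2, h3, h4⟩ := gauss_step hmem hirr
  exact ⟨⟨h1, h2, fun i => by rw [← partialQuot_succ]; exact hbdd (i+1)⟩, h3, hbdd 0, h4⟩

/-- Membership step, backward. -/
lemma mem_inv_step {K a : ℕ} (ha : 1 ≤ a) (haK : a ≤ K) {y : ℝ} (hy : y ∈ BTSet K) :
    ((a:ℝ) + y)⁻¹ ∈ BTSet K := by
  obtain ⟨hmem, hirr, hbdd⟩ := hy
  obtain ⟨h1, h2, h3, h4⟩ := inv_step ha hmem hirr
  refine ⟨h1, h2, fun i => ?_⟩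
  cases i with
  | zero => rw [h4]; exact haK
  | succ n => rw [partialQuot_succ, h3]; exact hbdd n

lemma iterate_mem' {K : ℕ} (n : ℕ) : ∀ {α : ℝ}, α ∈ BTSet K →
    gaussMap^[n] α ∈ BTSet K ∧ partialQuot (gaussMap^[n] α) 0 = partialQuot α n := by
  induction n with
  | zero => exact fun h => ⟨h, rfl⟩
  | succ n ih =>
    intro α hα
    obtain ⟨h1, h2⟩ := ih (mem_step hα).1
    rw [Function.iterate_succ_apply]
    exact ⟨h1, by rw [h2, ← partialQuot_succ]⟩

lemma iterate_mem {K : ℕ} {α : ℝ} (hα : α ∈ BTSet K) (n : ℕ) :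
    gaussMap^[n] α ∈ BTSet K ∧ partialQuot (gaussMap^[n] α) 0 = partialQuot α n :=
  iterate_mem' n hα

/-- Elements of `BTSet K` lie in `[(K+1)⁻¹, 1]`. -/
lemma mem_J {K : ℕ} {α : ℝ} (hα : α ∈ BTSet K) :
    ((K:ℝ) + 1)⁻¹ ≤ α ∧ α ≤ 1 := by
  obtain ⟨hg, h1, hK, heq⟩ := mem_step hα
  obtain ⟨⟨hg0, hg1⟩, -, -⟩ := hg
  have hKpos : (0:ℝ) < (K:ℝ) + 1 := by positivity
  have hle : (partialQuot α 0 : ℝ) + gaussMap α ≤ (K:ℝ) + 1 := by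
    have : (partialQuot α 0 : ℝ) ≤ (K:ℝ) := by exact_mod_cast hK
    linarith
  constructor
  · rw [heq]
    exact inv_anti₀ (by positivity) hle
  · exact le_of_lt hα.1.2

/- ### The compact covers -/

/-- Nested compact covers of `BTSet K`. -/
def Fs (K : ℕ) : ℕ → Set ℝ
  | 0 => Set.Icc 0 1
  | (n+1) => ⋃ a ∈ Finset.Icc 1 K, (fun y : ℝ => ((a:ℝ) + y)⁻¹) '' Fs K n

lemma Fs_subset_unit (K : ℕ) : ∀ n, Fs K n ⊆ Set.Icc (0:ℝ) 1 := by
  intro n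
  induction n with
  | zero => exact le_refl _
  | succ n ih =>
    intro x hx
    simp only [Fs, Set.mem_iUnion] at hx
    obtain ⟨a, ha, y, hy, rfl⟩ := hx
    simp only [Finset.mem_Icc] at ha
    obtain ⟨hy0, hy1⟩ := ih hy
    have ha1 : (1:ℝ) ≤ (a:ℝ) := by exact_mod_cast ha.1
    constructor
    · positivity
    · exact inv_le_one_of_one_le₀ (by linarith)

lemma Fs_compact (K : ℕ) : ∀ n, IsCompact (Fs K n) := by
  intro n
  induction n with
  | zero => exact isCompact_Icc
  | succ n ih =>
    refine (Finset.Icc 1 K).isCompact_biUnion (fun a ha => ?_)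
    refine ih.image_of_continuousOn ?_
    simp only [Finset.mem_Icc] at ha
    refine ContinuousOn.inv₀ (by fun_prop) (fun y hy => ?_)
    obtain ⟨hy0, _⟩ := Fs_subset_unit K n hy
    have : (1:ℝ) ≤ (a:ℝ) := by exact_mod_cast ha.1
    positivity

lemma Fs_succ_subset (K : ℕ) : ∀ n, Fs K (n+1) ⊆ Fs K n := by
  intro n
  induction n with
  | zero => exact Fs_subset_unit K 1
  | succ n ih =>
    intro x hx
    simp only [Fs, Set.mem_iUnion] at hx ⊢
    obtain ⟨a, ha, y, hy, rfl⟩ := hx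
    exact ⟨a, ha, y, ih hy, rfl⟩

lemma Fs_antitone (K : ℕ) {m n : ℕ} (h : m ≤ n) : Fs K n ⊆ Fs K m := by
  induction n with
  | zero => simp_all
  | succ n ih =>
    rcases Nat.lt_or_ge m (n+1) with h' | h'
    · exact (Fs_succ_subset K n).trans (ih (by omega))
    · have : m = n + 1 := by omega
      subst this; exact le_refl _

lemma BTSet_subset_Fs (K : ℕ) (n : ℕ) : BTSet K ⊆ Fs K n := by
  induction n with
  | zero => exact fun x hx => Set.Ioo_subset_Icc_self hx.1
  | succ n ih =>
    intro α hα
    obtain ⟨hg, h1, hKb, heq⟩ := mem_step hα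
    simp only [Fs, Set.mem_iUnion]
    exact ⟨partialQuot α 0, by simp [Finset.mem_Icc]; omega, gaussMap α, ih hg, heq.symm⟩

/-- Elements of the intersection lie in `[(K+1)⁻¹, 1)` and are positive. -/
lemma S_mem_Ioo {K : ℕ} (hK : 1 ≤ K) {x : ℝ} (hx : x ∈ ⋂ n, Fs K n) :
    ((K:ℝ) + 1)⁻¹ ≤ x ∧ x ∈ Set.Ioo (0:ℝ) 1 := by
  have h1 : x ∈ Fs K 1 := Set.mem_iInter.1 hx 1
  have h2 : x ∈ Fs K 2 := Set.mem_iInter.1 hx 2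
  simp only [Fs, Set.mem_iUnion] at h1 h2
  obtain ⟨a, ha, y, hy, rfl⟩ := h2
  simp only [Finset.mem_Icc] at ha
  have ha1 : (1:ℝ) ≤ (a:ℝ) := by exact_mod_cast ha.1
  -- y ∈ Fs K 1, so y ≥ (K+1)⁻¹
  have hy' : ((K:ℝ) + 1)⁻¹ ≤ y := by
    simp only [Fs, Set.mem_iUnion] at hy
    obtain ⟨b, hb, z, hz, rfl⟩ := hy
    simp only [Finset.mem_Icc] at hb
    obtain ⟨hz0, hz1⟩ := Fs_subset_unit K 0 hz
    have hbK : ((b:ℝ)) ≤ (K:ℝ) := by exact_mod_cast hb.2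
    have hb1 : (1:ℝ) ≤ (b:ℝ) := by exact_mod_cast hb.1
    refine inv_anti₀ (by linarith) (by linarith)
  have hKpos : (0:ℝ) < (K:ℝ) + 1 := by positivity
  have hKpos0 : (0:ℝ) < ((K:ℝ) + 1)⁻¹ := by positivity
  have hypos : 0 < y := lt_of_lt_of_le hKpos0 hy'
  have hyle : y ≤ 1 := (Fs_subset_unit K 1 (by
      simp only [Fs, Set.mem_iUnion] at hy ⊢
      exact hy)).2
  have haK : ((a:ℝ)) ≤ (K:ℝ) := by exact_mod_cast ha.2
  refine ⟨?_, ?_, ?_⟩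
  · exact inv_anti₀ (by positivity) (by linarith)
  · positivity
  · have : (1:ℝ) < (a:ℝ) + y := by linarith
    exact inv_lt_one_of_one_lt₀ this

/-- The key step: every element of the intersection has a Gauss-map step inside. -/
lemma S_step {K : ℕ} (hK : 1 ≤ K) {x : ℝ} (hx : x ∈ ⋂ n, Fs K n) :
    gaussMap x ∈ ⋂ n, Fs K n ∧ 1 ≤ partialQuot x 0 ∧ partialQuot x 0 ≤ K := by
  obtain ⟨hxlb, hx0, hx1⟩ := S_mem_Ioo hK hx
  have hxpos : 0 < x := hx0
  have hex : ∀ n : ℕ, ∃ a : ℕ, (1 ≤ a ∧ a ≤ K) ∧ ∃ y ∈ Fs K n, ((a:ℝ) + y)⁻¹ = x := by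
    intro n
    have := Set.mem_iInter.1 hx (n+1)
    simp only [Fs, Set.mem_iUnion] at this
    obtain ⟨a, ha, y, hy, hxy⟩ := this
    simp only [Finset.mem_Icc] at ha
    exact ⟨a, ha, y, hy, hxy⟩
  choose f hf1 y hy hxy using hex
  -- pigeonhole: some value a of f occurs infinitely often
  have hfin : ∀ n, f n < K + 1 := fun n => by have := (hf1 n).2; omega
  let g : ℕ → Fin (K+1) := fun n => ⟨f n, hfin n⟩
  obtain ⟨b, hb⟩ := Finite.exists_infinite_fiber g
  have hbinf : (g ⁻¹' {b}).Infinite := Set.infinite_coe_iff.1 hb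
  set a : ℕ := (b : ℕ) with hadef
  -- on the fiber, y n = x⁻¹ - a
  have hyval : ∀ n, g n = b → y n = x⁻¹ - (a : ℝ) := by
    intro n hn
    have hfa : f n = a := by
      have : (g n : ℕ) = (b : ℕ) := by rw [hn]
      simpa [g] using this
    have h0 : ((f n : ℝ) + y n)⁻¹ = x := hxy n
    have hy0 : 0 ≤ y n := (Fs_subset_unit K n (hy n)).1
    have hf1' : (1:ℝ) ≤ (f n : ℝ) := by exact_mod_cast (hf1 n).1
    have hpos : (0:ℝ) < (f n : ℝ) + y n := by linarith
    have : x⁻¹ = (f n : ℝ) + y n := by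
      rw [← h0, inv_inv]
    rw [hfa] at this
    linarith [this]
  -- hence x⁻¹ - a ∈ Fs K m for every m
  have hzmem : ∀ m : ℕ, x⁻¹ - (a:ℝ) ∈ Fs K m := by
    intro m
    obtain ⟨n, hn, hmn⟩ := hbinf.exists_gt m
    have : y n = x⁻¹ - (a:ℝ) := hyval n hn
    exact Fs_antitone K (le_of_lt hmn) (this ▸ hy n)
  have hzS : x⁻¹ - (a:ℝ) ∈ ⋂ n, Fs K n := Set.mem_iInter.2 hzmem
  obtain ⟨hzlb, hz0, hz1⟩ := S_mem_Ioo hK hzS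
  -- identify the floor of x⁻¹
  have ha1 : 1 ≤ a := by
    have := (hf1 0).1
    obtain ⟨n, hn, -⟩ := hbinf.exists_gt 0
    have hfa : f n = a := by
      have : (g n : ℕ) = (b : ℕ) := by rw [hn]
      simpa [g] using this
    have := (hf1 n).1
    omega
  have haK : a ≤ K := by
    obtain ⟨n, hn, -⟩ := hbinf.exists_gt 0
    have hfa : f n = a := by
      have : (g n : ℕ) = (b : ℕ) := by rw [hn]
      simpa [g] using this
    have := (hf1 n).2
    omega
  have hfloor : ⌊x⁻¹⌋ = (a:ℤ) := by
    rw [Int.floor_eq_iff]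
    push_cast
    constructor <;> linarith
  have hgauss : gaussMap x = x⁻¹ - (a:ℝ) := by
    rw [gaussMap, Int.fract, hfloor]
    push_cast
    ring
  refine ⟨hgauss ▸ hzS, ?_, ?_⟩
  · simp only [partialQuot, Function.iterate_zero, id, hfloor]
    omega
  · simp only [partialQuot, Function.iterate_zero, id, hfloor]
    omega

lemma S_iterate {K : ℕ} (hK : 1 ≤ K) {x : ℝ} (hx : x ∈ ⋂ n, Fs K n) (n : ℕ) :
    gaussMap^[n] x ∈ ⋂ n, Fs K n := by
  induction n with
  | zero => exact hx
  | succ n ih =>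
    rw [Function.iterate_succ_apply']
    exact (S_step hK ih).1

lemma S_pq {K : ℕ} (hK : 1 ≤ K) (n : ℕ) : ∀ {x : ℝ}, x ∈ ⋂ m, Fs K m →
    partialQuot x n = partialQuot (gaussMap^[n] x) 0 := by
  induction n with
  | zero => intro x _; rfl
  | succ n ih =>
    intro x hx
    rw [partialQuot_succ, ih (S_step hK hx).1, Function.iterate_succ_apply]

/-- No rational number lies in the intersection. -/
lemma S_irrational {K : ℕ} (hK : 1 ≤ K) {x : ℝ} (hx : x ∈ ⋂ n, Fs K n) :
    Irrational x := by
  rw [Irrational]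
  intro hmem
  obtain ⟨q, rfl⟩ := hmem
  -- strong induction on the numerator
  have key : ∀ N : ℕ, ∀ q : ℚ, q.num.natAbs ≤ N → (q:ℝ) ∉ ⋂ n, Fs K n := by
    intro N
    induction N with
    | zero =>
      intro q hq hqS
      obtain ⟨-, h0, h1⟩ := S_mem_Ioo hK hqS
      have : 0 < q := by exact_mod_cast h0
      have : 0 < q.num := Rat.num_pos.2 this
      omega
    | succ N ih =>
      intro q hq hqS
      obtain ⟨-, h0, h1⟩ := S_mem_Ioo hK hqS
      have hqpos : 0 < q := by exact_mod_cast h0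
      have hnum : (Int.fract q⁻¹).num < q.num := Rat.fract_inv_num_lt_num_of_pos hqpos
      have hgauss : gaussMap (q:ℝ) = ((Int.fract q⁻¹ : ℚ) : ℝ) := by
        rw [gaussMap, ← Rat.cast_inv, Rat.cast_fract]
      have hmem' : ((Int.fract q⁻¹ : ℚ):ℝ) ∈ ⋂ n, Fs K n := by
        rw [← hgauss]
        exact (S_step hK hqS).1
      have h0' : (0:ℝ) < ((Int.fract q⁻¹ : ℚ):ℝ) := (S_mem_Ioo hK hmem').2.1
      have hqn : 0 < (Int.fract q⁻¹).num := Rat.num_pos.2 (by exact_mod_cast h0')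
      have hqpos' : 0 < q.num := Rat.num_pos.2 hqpos
      exact ih (Int.fract q⁻¹) (by omega) hmem'
  exact key q.num.natAbs q (le_refl _) hx

/-- The intersection of the covers is exactly `BTSet K`. -/
lemma BTSet_eq_iInter {K : ℕ} (hK : 1 ≤ K) : BTSet K = ⋂ n, Fs K n := by
  apply Set.Subset.antisymm
  · exact fun α hα => Set.mem_iInter.2 fun n => BTSet_subset_Fs K n hα
  · intro x hx
    refine ⟨(S_mem_Ioo hK hx).2, S_irrational hK hx, fun i => ?_⟩
    have hiter := S_iterate hK hx i
    rw [S_pq hK i hx]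
    exact (S_step hK hiter).2.2

lemma BTSet_isCompact {K : ℕ} (hK : 1 ≤ K) : IsCompact (BTSet K) := by
  rw [BTSet_eq_iInter hK]
  refine (Fs_compact K 0).of_isClosed_subset ?_ ?_
  · exact isClosed_iInter fun n => (Fs_compact K n).isClosed
  · exact Set.iInter_subset _ 0

/- ### Nonemptiness: √2 - 1 = [2,2,2,…] -/

lemma sqrt2_mem_BTSet {K : ℕ} (hK : 2 ≤ K) : (Real.sqrt 2 - 1) ∈ BTSet K := by
  have h1 : (1:ℝ) < Real.sqrt 2 := by
    have : Real.sqrt 1 < Real.sqrt 2 := Real.sqrt_lt_sqrt (by norm_num) (by norm_num)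
    simpa using this
  have h2 : Real.sqrt 2 < 2 := (Real.sqrt_lt' (by norm_num)).2 (by norm_num)
  have hsq : Real.sqrt 2 * Real.sqrt 2 = 2 := Real.mul_self_sqrt (by norm_num)
  have hinv : (Real.sqrt 2 - 1)⁻¹ = Real.sqrt 2 + 1 :=
    inv_eq_of_mul_eq_one_right (by nlinarith)
  have hfloor : ⌊(Real.sqrt 2 - 1)⁻¹⌋ = 2 := by
    rw [hinv, Int.floor_eq_iff]
    push_cast
    constructor <;> linarith
  have hfix : gaussMap (Real.sqrt 2 - 1) = Real.sqrt 2 - 1 := by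
    rw [gaussMap, Int.fract, hfloor, hinv]
    push_cast
    ring
  refine ⟨⟨by linarith, by linarith⟩, ?_, fun i => ?_⟩
  · simpa using irrational_sqrt_two.sub_intCast 1
  · have hiter : gaussMap^[i] (Real.sqrt 2 - 1) = Real.sqrt 2 - 1 :=
      Function.iterate_fixed hfix i
    simp only [partialQuot, hiter, hfloor]
    omega

/- ### Perfectness -/

/-- Composition of the inverse branches along the partial-quotient word of `α`. -/
noncomputable def wc (α : ℝ) : ℕ → ℝ → ℝ
  | 0 => id
  | (n+1) => fun x => wc α n (((partialQuot α n : ℝ) + x)⁻¹)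

lemma wc_fixed {K : ℕ} {α : ℝ} (hα : α ∈ BTSet K) (n : ℕ) :
    wc α n (gaussMap^[n] α) = α := by
  induction n with
  | zero => rfl
  | succ n ih =>
    have hmem := (iterate_mem hα n).1
    have hpq := (iterate_mem hα n).2
    obtain ⟨-, -, -, heq⟩ := mem_step hmem
    show wc α n (((partialQuot α n : ℝ) + gaussMap^[n+1] α)⁻¹) = α
    rw [Function.iterate_succ_apply', ← hpq, ← heq]
    exact ih

lemma wc_mem {K : ℕ} {α : ℝ} (hα : α ∈ BTSet K) (n : ℕ) {x : ℝ} (hx : x ∈ BTSet K) :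
    wc α n x ∈ BTSet K := by
  induction n generalizing x with
  | zero => exact hx
  | succ n ih =>
    have hmem := (iterate_mem hα n).1
    obtain ⟨-, h1, hKb, -⟩ := mem_step hmem
    rw [(iterate_mem hα n).2] at h1 hKb
    exact ih (mem_inv_step h1 hKb hx)

lemma step_contract {K a : ℕ} (ha : 1 ≤ a) (haK : a ≤ K) {x y : ℝ}
    (hx : x ∈ Set.Icc (((K:ℝ)+1)⁻¹) 1) (hy : y ∈ Set.Icc (((K:ℝ)+1)⁻¹) 1) :
    ((a:ℝ)+x)⁻¹ ∈ Set.Icc (((K:ℝ)+1)⁻¹) 1 ∧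
      |((a:ℝ)+x)⁻¹ - ((a:ℝ)+y)⁻¹| ≤ ((1 + ((K:ℝ)+1)⁻¹)⁻¹)^2 * |x - y| := by
  obtain ⟨hx0, hx1⟩ := hx
  obtain ⟨hy0, hy1⟩ := hy
  have hK1 : (0:ℝ) < (K:ℝ)+1 := by positivity
  have hKi : (0:ℝ) < ((K:ℝ)+1)⁻¹ := by positivity
  have ha1 : (1:ℝ) ≤ (a:ℝ) := by exact_mod_cast ha
  have haK' : ((a:ℝ)) ≤ (K:ℝ) := by exact_mod_cast haK
  have hd : (1:ℝ) + ((K:ℝ)+1)⁻¹ ≤ (a:ℝ) + x := by linarith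
  have hd' : (1:ℝ) + ((K:ℝ)+1)⁻¹ ≤ (a:ℝ) + y := by linarith
  have hpos : (0:ℝ) < (a:ℝ) + x := by linarith
  have hpos' : (0:ℝ) < (a:ℝ) + y := by linarith
  refine ⟨⟨inv_anti₀ hpos (by linarith), inv_le_one_of_one_le₀ (by linarith)⟩, ?_⟩
  have key : ((a:ℝ)+x)⁻¹ - ((a:ℝ)+y)⁻¹ = (y - x) / (((a:ℝ)+x) * ((a:ℝ)+y)) := by
    field_simp
    ring
  have hdpos : (0:ℝ) < 1 + ((K:ℝ)+1)⁻¹ := by positivity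
  have hP : (1 + ((K:ℝ)+1)⁻¹)^2 ≤ ((a:ℝ)+x) * ((a:ℝ)+y) := by nlinarith
  calc |((a:ℝ)+x)⁻¹ - ((a:ℝ)+y)⁻¹| = |x - y| / (((a:ℝ)+x) * ((a:ℝ)+y)) := by
        rw [key, abs_div, abs_of_pos (mul_pos hpos hpos'), abs_sub_comm]
    _ ≤ |x - y| / ((1 + ((K:ℝ)+1)⁻¹)^2) :=
        div_le_div_of_nonneg_left (abs_nonneg _) (by positivity) hP
    _ = ((1 + ((K:ℝ)+1)⁻¹)⁻¹)^2 * |x - y| := by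
        rw [div_eq_mul_inv, inv_pow, mul_comm]

lemma wc_contract {K : ℕ} {α : ℝ} (hα : α ∈ BTSet K) (n : ℕ) :
    ∀ {x y : ℝ}, x ∈ Set.Icc (((K:ℝ)+1)⁻¹) 1 → y ∈ Set.Icc (((K:ℝ)+1)⁻¹) 1 →
    |wc α n x - wc α n y| ≤ (((1 + ((K:ℝ)+1)⁻¹)⁻¹)^2) ^ n * |x - y| := by
  induction n with
  | zero => intro x y _ _; simp [wc]
  | succ n ih =>
    intro x y hx hy
    have hmem := (iterate_mem hα n).1
    obtain ⟨-, h1, hKb, -⟩ := mem_step hmem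
    rw [(iterate_mem hα n).2] at h1 hKb
    obtain ⟨hTx, -⟩ := step_contract h1 hKb hx hy
    obtain ⟨hTy, hstep⟩ := step_contract h1 hKb hy hx
    rw [abs_sub_comm, abs_sub_comm y x] at hstep
    have hih := ih hTx hTy
    show |wc α n (((partialQuot α n : ℝ) + x)⁻¹) - wc α n (((partialQuot α n : ℝ) + y)⁻¹)| ≤ _
    calc |wc α n (((partialQuot α n : ℝ) + x)⁻¹) - wc α n (((partialQuot α n : ℝ) + y)⁻¹)|
        ≤ (((1 + ((K:ℝ)+1)⁻¹)⁻¹)^2) ^ n * |((partialQuot α n : ℝ) + x)⁻¹ - ((partialQuot α n : ℝ) + y)⁻¹| := hih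
      _ ≤ (((1 + ((K:ℝ)+1)⁻¹)⁻¹)^2) ^ n * (((1 + ((K:ℝ)+1)⁻¹)⁻¹)^2 * |x - y|) := by
          refine mul_le_mul_of_nonneg_left hstep (by positivity)
      _ = (((1 + ((K:ℝ)+1)⁻¹)⁻¹)^2) ^ (n+1) * |x - y| := by ring

lemma wc_inj {α : ℝ} (n : ℕ) {x y : ℝ} (hx : 0 < x) (hy : 0 < y)
    (h : wc α n x = wc α n y) : x = y := by
  induction n generalizing x y with
  | zero => exact h
  | succ n ih =>
    have hax : (0:ℝ) < (partialQuot α n : ℝ) + x := by positivity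
    have hay : (0:ℝ) < (partialQuot α n : ℝ) + y := by positivity
    have := ih (inv_pos.2 hax) (inv_pos.2 hay) h
    have h2 : (partialQuot α n : ℝ) + x = (partialQuot α n : ℝ) + y := by
      have := congrArg (·⁻¹) this
      simpa [inv_inv] using this
    linarith

/-- For `K ≥ 2`, the set `𝒷𝒯_K` is a Cantor set: a nonempty compact perfect
totally disconnected subset of `ℝ` (in particular it has empty interior). -/
theorem btSet_is_cantor (K : ℕ) (hK : 2 ≤ K) :
    (BTSet K).Nonempty ∧ IsCompact (BTSet K) ∧ Perfect (BTSet K) ∧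
      IsTotallyDisconnected (BTSet K) ∧ interior (BTSet K) = ∅ := by
  have hK1 : 1 ≤ K := by omega
  have hcompact := BTSet_isCompact hK1
  have hclosed := hcompact.isClosed
  set c : ℝ := ((1 + ((K:ℝ)+1)⁻¹)⁻¹)^2 with hc
  have hKi : (0:ℝ) < ((K:ℝ)+1)⁻¹ := by positivity
  have hc0 : 0 < c := by rw [hc]; positivity
  have hc1 : c < 1 := by
    have h1 : (1:ℝ) < 1 + ((K:ℝ)+1)⁻¹ := by linarith
    have h2 : (1 + ((K:ℝ)+1)⁻¹)⁻¹ < 1 := inv_lt_one_of_one_lt₀ h1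
    have h3 : (0:ℝ) < (1 + ((K:ℝ)+1)⁻¹)⁻¹ := by positivity
    rw [hc]
    nlinarith
  have htd : IsTotallyDisconnected (BTSet K) := by
    intro t hts hconn x hx y hy
    by_contra hne
    rcases lt_trichotomy x y with h | h | h
    · obtain ⟨q, hq1, hq2⟩ := exists_rat_btwn h
      have hqt : (q:ℝ) ∈ t := hconn.Icc_subset hx hy ⟨le_of_lt hq1, le_of_lt hq2⟩
      exact (hts hqt).2.1 ⟨q, rfl⟩
    · exact hne h
    · obtain ⟨q, hq1, hq2⟩ := exists_rat_btwn h
      have hqt : (q:ℝ) ∈ t := hconn.Icc_subset hy hx ⟨le_of_lt hq1, le_of_lt hq2⟩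
      exact (hts hqt).2.1 ⟨q, rfl⟩
  refine ⟨⟨_, sqrt2_mem_BTSet hK⟩, hcompact, ⟨hclosed, ?_⟩, htd, ?_⟩
  · -- preperfect
    intro α hα
    rw [accPt_iff_nhds]
    intro U hU
    obtain ⟨ε, hε, hball⟩ := Metric.mem_nhds_iff.1 hU
    obtain ⟨n, hn⟩ := exists_pow_lt_of_lt_one hε hc1
    set a' : ℕ := if partialQuot α n = 1 then 2 else 1 with ha'
    have ha'1 : 1 ≤ a' := by rw [ha']; split <;> omega
    have ha'K : a' ≤ K := by rw [ha']; split <;> omega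
    have ha'ne : a' ≠ partialQuot α n := by
      by_cases h : partialQuot α n = 1
      · rw [ha', if_pos h, h]; omega
      · rw [ha', if_neg h]; omega
    have hGn1 : gaussMap^[n+1] α ∈ BTSet K := (iterate_mem hα (n+1)).1
    have hGn : gaussMap^[n] α ∈ BTSet K := (iterate_mem hα n).1
    set γ : ℝ := ((a' : ℝ) + gaussMap^[n+1] α)⁻¹ with hγ
    have hγmem : γ ∈ BTSet K := mem_inv_step ha'1 ha'K hGn1
    have hβmem : wc α n γ ∈ BTSet K := wc_mem hα n hγmem
    have hγJ : γ ∈ Set.Icc (((K:ℝ)+1)⁻¹) 1 := ⟨(mem_J hγmem).1, (mem_J hγmem).2⟩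
    have hGJ : gaussMap^[n] α ∈ Set.Icc (((K:ℝ)+1)⁻¹) 1 :=
      ⟨(mem_J hGn).1, (mem_J hGn).2⟩
    have h5 := wc_contract hα n hγJ hGJ
    rw [wc_fixed hα n] at h5
    have habs : |γ - gaussMap^[n] α| ≤ 1 := by
      rw [abs_sub_le_iff]
      constructor
      · linarith [hγJ.2, hGJ.1]
      · linarith [hγJ.1, hGJ.2]
    have hdist : |wc α n γ - α| < ε := by
      have : c ^ n * |γ - gaussMap^[n] α| ≤ c ^ n * 1 :=
        mul_le_mul_of_nonneg_left habs (by positivity)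
      calc |wc α n γ - α| ≤ c ^ n * |γ - gaussMap^[n] α| := h5
        _ ≤ c ^ n * 1 := this
        _ = c ^ n := mul_one _
        _ < ε := hn
    have hne : wc α n γ ≠ α := by
      intro h
      have heq : γ = gaussMap^[n] α :=
        wc_inj n hγmem.1.1 hGn.1.1 (h.trans (wc_fixed hα n).symm)
      have hpqγ : partialQuot γ 0 = a' :=
        (inv_step ha'1 hGn1.1 hGn1.2.1).2.2.2
      rw [heq, (iterate_mem hα n).2] at hpqγ
      exact ha'ne hpqγ.symm
    refine ⟨wc α n γ, ⟨hball ?_, hβmem⟩, hne⟩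
    rw [Metric.mem_ball, Real.dist_eq]
    exact hdist
  · -- empty interior
    by_contra h
    obtain ⟨x, hx⟩ := Set.nonempty_iff_ne_empty.2 h
    obtain ⟨ε, hε, hball⟩ := Metric.isOpen_iff.1 isOpen_interior x hx
    obtain ⟨q, hq1, hq2⟩ := exists_rat_btwn (show x < x + ε by linarith)
    have hqmem : (q:ℝ) ∈ BTSet K := interior_subset (hball (by
      rw [Metric.mem_ball, Real.dist_eq, abs_lt]
      constructor <;> linarith))
    exact hqmem.2.1 ⟨q, rfl⟩
end

section
/- Let f : ℝ → ℝ be a continuous, strictly increasing map with f(x+1) = f(x)+1 for all x (a lift of an orientation-preserving circle homeomorphism), and suppose its translation number τ(f) = α is irrational. Then for every real number t ≠ 0, the translation number of the map x ↦ f(x) + t (the lift of R_t ∘ f) is different from α. -/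
open Filter Set

/-- If `G = F + s` pointwise with `s > 0`, both continuous lifts, and `τ F = α` is
irrational, then `τ G ≠ α`. -/
private lemma key_translate_ne (F G : CircleDeg1Lift)
    (hF : Continuous (F : ℝ → ℝ)) (hG : Continuous (G : ℝ → ℝ))
    (s : ℝ) (hs : 0 < s) (hFG : ∀ x : ℝ, G x = F x + s)
    (α : ℝ) (hirr : Irrational α) (hFτ : F.translationNumber = α) :
    G.translationNumber ≠ α := by
  intro hGτ
  -- iterate comparison: G^[m] x ≥ F^[m] x + s for m ≥ 1
  have hiter : ∀ m : ℕ, ∀ x : ℝ, (F : ℝ → ℝ)^[m + 1] x + s ≤ (G : ℝ → ℝ)^[m + 1] x := by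
    intro m
    induction m with
    | zero => intro x; simp [hFG x]
    | succ n ih =>
      intro x
      have h1 := ih x
      calc (F : ℝ → ℝ)^[n + 1 + 1] x + s
          = F ((F : ℝ → ℝ)^[n + 1] x) + s := by
            rw [Function.iterate_succ_apply' (F : ℝ → ℝ)]
        _ ≤ F ((F : ℝ → ℝ)^[n + 1] x + s) + s := by
            have := F.mono (le_add_of_nonneg_right hs.le :
              (F : ℝ → ℝ)^[n + 1] x ≤ (F : ℝ → ℝ)^[n + 1] x + s)
            linarith
        _ ≤ F ((G : ℝ → ℝ)^[n + 1] x) + s := by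
            have := F.mono h1; linarith
        _ = G ((G : ℝ → ℝ)^[n + 1] x) := (hFG _).symm
        _ = (G : ℝ → ℝ)^[n + 1 + 1] x := by
            simp [Function.iterate_succ_apply' (G : ℝ → ℝ)]
  -- Dirichlet approximation: find k > 0, j with 0 < |k α - j| < s
  obtain ⟨n, hn⟩ := exists_nat_one_div_lt hs
  obtain ⟨j, k, hk0, hkn, hjk⟩ := Real.exists_int_int_abs_mul_sub_le α (Nat.succ_pos n)
  have hlt : |(k : ℝ) * α - j| < s := by
    refine lt_of_le_of_lt hjk ?_
    calc (1 : ℝ) / ((n + 1 : ℕ) + 1) ≤ 1 / (n + 1) := by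
          apply one_div_le_one_div_of_le <;> push_cast <;> linarith
      _ < s := hn
  have hkne : (k : ℝ) ≠ 0 := Int.cast_ne_zero.2 hk0.ne'
  have hne : (k : ℝ) * α - j ≠ 0 := by
    have : Irrational ((k : ℝ) * α) := hirr.intCast_mul hk0.ne'
    exact sub_ne_zero.2 (this.ne_int j)
  set q : ℕ := k.toNat with hq
  have hq0 : 0 < q := by omega
  have hqk : (q : ℝ) = (k : ℝ) := by
    rw [hq]; exact_mod_cast congrArg (Int.cast : ℤ → ℝ) (Int.toNat_of_nonneg hk0.le)
  have hFq : (F ^ q).translationNumber = (k : ℝ) * α := by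
    rw [F.translationNumber_pow q, hFτ, hqk]
  have hGq : (G ^ q).translationNumber = (k : ℝ) * α := by
    rw [G.translationNumber_pow q, hGτ, hqk]
  have hFqc : Continuous ((F ^ q : CircleDeg1Lift) : ℝ → ℝ) := by
    rw [CircleDeg1Lift.coe_pow]; exact hF.iterate q
  have hGqc : Continuous ((G ^ q : CircleDeg1Lift) : ℝ → ℝ) := by
    rw [CircleDeg1Lift.coe_pow]; exact hG.iterate q
  obtain ⟨m, hm⟩ := Nat.exists_eq_succ_of_ne_zero hq0.ne'
  rcases hne.lt_or_gt with hd | hd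
  · -- k α < j, with j - k α < s : use point where F^q attains its translation number
    obtain ⟨x, hx⟩ := (F ^ q).exists_eq_add_translationNumber hFqc
    have hineq : x + (j : ℝ) ≤ (G ^ q) x := by
      have h1 : (F : ℝ → ℝ)^[q] x + s ≤ (G : ℝ → ℝ)^[q] x := by
        rw [hm]; exact hiter m x
      have h2 : (F ^ q) x = x + (k : ℝ) * α := by rw [hx, hFq]
      have h3 : ((F ^ q : CircleDeg1Lift) : ℝ → ℝ) x = (F : ℝ → ℝ)^[q] x := by
        rw [CircleDeg1Lift.coe_pow]
      have h4 : ((G ^ q : CircleDeg1Lift) : ℝ → ℝ) x = (G : ℝ → ℝ)^[q] x := by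
        rw [CircleDeg1Lift.coe_pow]
      rw [h4]
      have habs : |(k : ℝ) * α - j| = -((k : ℝ) * α - j) := abs_of_neg (by linarith)
      rw [habs] at hlt
      rw [h3] at h2
      linarith
    have := (G ^ q).le_translationNumber_of_add_int_le hineq
    rw [hGq] at this
    linarith
  · -- j < k α, with k α - j < s : use point where G^q attains its translation number
    obtain ⟨x, hx⟩ := (G ^ q).exists_eq_add_translationNumber hGqc
    have hineq : (F ^ q) x ≤ x + (j : ℝ) := by
      have h1 : (F : ℝ → ℝ)^[q] x + s ≤ (G : ℝ → ℝ)^[q] x := by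
        rw [hm]; exact hiter m x
      have h2 : (G ^ q) x = x + (k : ℝ) * α := by rw [hx, hGq]
      have h3 : ((F ^ q : CircleDeg1Lift) : ℝ → ℝ) x = (F : ℝ → ℝ)^[q] x := by
        rw [CircleDeg1Lift.coe_pow]
      have h4 : ((G ^ q : CircleDeg1Lift) : ℝ → ℝ) x = (G : ℝ → ℝ)^[q] x := by
        rw [CircleDeg1Lift.coe_pow]
      rw [h3]
      have : |(k : ℝ) * α - j| = (k : ℝ) * α - j := abs_of_pos (by linarith)
      rw [this] at hlt
      rw [h4] at h2
      linarith
    have := (F ^ q).translationNumber_le_of_le_add_int hineq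
    rw [hFq] at this
    linarith

/-- If `f` is the lift of an orientation-preserving circle homeomorphism (continuous,
strictly increasing, commuting with `x ↦ x + 1`) with irrational translation number `α`,
then for every real `t ≠ 0` the translation number of `x ↦ f(x) + t` (the lift of
`R_t ∘ f`) differs from `α`. -/
theorem translationNumber_ne_of_translate (f : CircleDeg1Lift)
    (hcont : Continuous (f : ℝ → ℝ)) (hmono : StrictMono (f : ℝ → ℝ))
    (α : ℝ) (hirr : Irrational α) (hτ : f.translationNumber = α) :
    ∀ t : ℝ, t ≠ 0 → ∀ g : CircleDeg1Lift, (∀ x : ℝ, g x = f x + t) →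
      g.translationNumber ≠ α := by
  intro t ht g hg hgτ
  have hgcont : Continuous (g : ℝ → ℝ) := by
    have : (g : ℝ → ℝ) = fun x => f x + t := funext hg
    rw [this]; exact hcont.add continuous_const
  rcases ht.lt_or_gt with htneg | htpos
  · -- t < 0 : f = g + (-t)
    exact key_translate_ne g f hgcont hcont (-t) (by linarith)
      (fun x => by rw [hg x]; ring) α hirr hgτ hτ
  · exact key_translate_ne f g hcont hgcont t htpos hg α hirr hτ hgτ
end

section
/- Let ε > 0 and let v : Π_ε → ℂ be holomorphic, 1-periodic (v(z+1) = v(z)), continuous on the closure of Π_ε, and bounded by M = sup_{z ∈ closure(Π_ε)} |v(z)|. Then its Fourier coefficients v̂(n) = ∫_0^1 v(x) e^{−2πinx} dx satisfy |v̂(n)| ≤ M e^{−2πε|n|} for every integer n. -/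
/-!
Shift the line of integration from `ℝ` to `ℝ + iy` with `y = -ε · sgn n`: by Cauchy's theorem on
the rectangle `[0, 1] × [0, y]` the two horizontal integrals agree, since the vertical sides cancel
by periodicity (which passes to the closed strip by continuity). On the shifted line the kernel
`e^{-2πinz}` has modulus `e^{2πny} = e^{-2πε|n|}`, while `|v| ≤ M`.
-/

open Filter Set

/-- The horizontal strip `Π_ε = {z : |Im z| < ε}` (a lift of the cylinder). -/
def Strip (ε : ℝ) : Set ℂ := {z : ℂ | |z.im| < ε}

open Complex intervalIntegral
open scoped Interval Real

-- Cauchy's theorem on the rectangle `[a, b] × [0, y]`, whose vertical sides cancel.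
theorem integral_add_mul_I_eq_of_eq_on_vertical_sides {E : Type*} [NormedAddCommGroup E]
    [NormedSpace ℂ E] (f : ℂ → E) (a b y : ℝ)
    (hc : ContinuousOn f ([[a, b]] ×ℂ [[0, y]]))
    (hd : DifferentiableOn ℂ f (Ioo (min a b) (max a b) ×ℂ Ioo (min 0 y) (max 0 y)))
    (hside : ∀ t ∈ [[0, y]], f (b + t * I) = f (a + t * I)) :
    ∫ x in a..b, f (x + y * I) = ∫ x in a..b, f x := by
  have hrect := integral_boundary_rect_eq_zero_of_continuousOn_of_differentiableOn f a
    (b + y * I) (by simpa using hc) (by simpa using hd)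
  simp only [ofReal_re, ofReal_im, add_re, add_im, mul_re, mul_im, I_re, I_im, mul_zero,
    mul_one, sub_zero, zero_mul, add_zero, zero_add, ofReal_zero] at hrect
  rw [integral_congr hside, add_sub_cancel_right, sub_eq_zero] at hrect
  exact hrect.symm

theorem closure_strip {ε : ℝ} (hε : 0 < ε) : closure (Strip ε) = {z : ℂ | |z.im| ≤ ε} := by
  have hStrip : Strip ε = im ⁻¹' Ioo (-ε) ε := by ext z; simp [Strip, abs_lt]
  rw [hStrip, closure_preimage_im, closure_Ioo (by linarith)]
  ext z; simp [abs_le]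

theorem reProdIm_uIcc_subset_closure_strip {ε y : ℝ} (hε : 0 < ε) (hy : |y| ≤ ε) (s : Set ℝ) :
    s ×ℂ [[0, y]] ⊆ closure (Strip ε) := by
  intro z hz
  rw [closure_strip hε]
  simpa using (abs_sub_left_of_mem_uIcc (mem_reProdIm.mp hz).2).trans (by simpa using hy)

theorem reProdIm_Ioo_subset_strip {ε y : ℝ} (hy : |y| ≤ ε) (s : Set ℝ) :
    s ×ℂ Ioo (min 0 y) (max 0 y) ⊆ Strip ε := by
  rintro z ⟨-, hlo, hhi⟩
  exact (abs_lt.mpr ⟨(le_min (neg_nonpos.mpr (abs_nonneg y)) (neg_abs_le y)).trans_lt hlo,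
    hhi.trans_le ((max_le_iff).mpr ⟨abs_nonneg y, le_abs_self y⟩)⟩).trans_le hy

theorem apply_add_one_eq_on_closure_strip {X : Type*} [TopologicalSpace X] [T2Space X] {ε : ℝ}
    {f : ℂ → X} (hf : ContinuousOn f (closure (Strip ε)))
    (hper : ∀ z ∈ Strip ε, f (z + 1) = f z) : ∀ z ∈ closure (Strip ε), f (z + 1) = f z := by
  have hmaps : MapsTo (fun z : ℂ ↦ z + 1) (closure (Strip ε)) (closure (Strip ε)) :=
    fun _ hz ↦ map_mem_closure (f := fun w : ℂ ↦ w + 1) (continuous_add_const 1) hz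
      fun w hw ↦ by simpa [Strip] using hw
  exact EqOn.of_subset_closure hper (hf.comp (continuous_add_const 1).continuousOn hmaps) hf
    subset_closure Subset.rfl

theorem exp_neg_two_pi_I_int_mul_add_one (n : ℤ) (z : ℂ) :
    exp (-(2 * π * I * n * (z + 1))) = exp (-(2 * π * I * n * z)) := by
  rw [show -(2 * π * I * n * (z + 1)) = -(2 * π * I * n * z) + (-n : ℤ) * (2 * π * I) by
    push_cast; ring, exp_add, exp_int_mul_two_pi_mul_I, mul_one]

theorem norm_exp_neg_two_pi_I_mul_add_mul_I (r x y : ℝ) :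
    ‖exp (-(2 * π * I * r * (x + y * I)))‖ = Real.exp (2 * π * r * y) := by
  rw [norm_exp]
  congr 1
  simp

theorem exists_abs_le_mul_eq_neg_mul_abs {ε : ℝ} (hε : 0 ≤ ε) (r : ℝ) :
    ∃ y : ℝ, |y| ≤ ε ∧ r * y = -(ε * |r|) := by
  rcases le_total 0 r with hr | hr
  · exact ⟨-ε, by simp [abs_of_nonneg hε], by rw [abs_of_nonneg hr]; ring⟩
  · exact ⟨ε, by simp [abs_of_nonneg hε], by rw [abs_of_nonpos hr]; ring⟩

/-- Exponential decay of Fourier coefficients: a `1`-periodic holomorphic function on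
`Π_ε`, continuous on the closure and bounded by `M` there, has Fourier coefficients
`v̂(n) = ∫_0^1 v(x) e^{−2πinx} dx` with `|v̂(n)| ≤ M e^{−2πε|n|}`. -/
theorem fourier_coeff_exponential_decay (ε : ℝ) (hε : 0 < ε) (v : ℂ → ℂ) (M : ℝ)
    (hval : DifferentiableOn ℂ v (Strip ε))
    (hper : ∀ z ∈ Strip ε, v (z + 1) = v z)
    (hcont : ContinuousOn v (closure (Strip ε)))
    (hM : ∀ z ∈ closure (Strip ε), ‖v z‖ ≤ M) :
    ∀ n : ℤ,
      ‖∫ x in (0:ℝ)..1, v (x : ℂ) *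
          Complex.exp (-(2 * (Real.pi : ℂ) * Complex.I * (n : ℂ) * (x : ℂ)))‖ ≤
        M * Real.exp (-(2 * Real.pi * ε) * |(n : ℝ)|) := by
  intro n
  obtain ⟨y, hy, hny⟩ := exists_abs_le_mul_eq_neg_mul_abs hε.le (n : ℝ)
  set g : ℂ → ℂ := fun z ↦ v z * exp (-(2 * π * I * n * z))
  have hg_cont : ContinuousOn g (closure (Strip ε)) := hcont.mul (by fun_prop)
  have hg_per := apply_add_one_eq_on_closure_strip hg_cont fun z hz ↦ by
    simp only [g, hper z hz, exp_neg_two_pi_I_int_mul_add_one]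
  have hband := reProdIm_uIcc_subset_closure_strip hε hy
  rw [← integral_add_mul_I_eq_of_eq_on_vertical_sides g 0 1 y (hg_cont.mono (hband _))
    ((hval.mul (by fun_prop)).mono (reProdIm_Ioo_subset_strip hy _))
    fun t ht ↦ by simpa [add_comm] using hg_per _ (hband univ ⟨trivial, by simpa using ht⟩)]
  calc _ ≤ M * Real.exp (-(2 * π * ε) * |(n : ℝ)|) * |1 - 0| := by
        refine norm_integral_le_of_norm_le_const fun x _ ↦ ?_
        have hexp : 2 * π * n * y = -(2 * π * ε) * |(n : ℝ)| := by rw [mul_assoc, hny]; ring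
        rw [norm_mul, ← ofReal_intCast, norm_exp_neg_two_pi_I_mul_add_mul_I, hexp]
        exact mul_le_mul_of_nonneg_right (hM _ (hband univ ⟨trivial, by simp⟩)) (Real.exp_nonneg _)
    _ = _ := by simp
end

section
/- Let ε > 0 and let F : Π_ε → ℂ be holomorphic and injective with F(z+1) = F(z)+1, F(ℝ) ⊆ ℝ, and F strictly increasing on ℝ. Then F maps the open upper half-strip {z : 0 < Im z < ε} into {z : Im z ≥ 0}. Moreover, suppose additionally that F(Π_ε) ⊆ Π_{ε'} for some ε' > 0, and let ζ ∈ ℂ with 0 < Im ζ and ε' + Im ζ ≤ ε; set G(z) = F(z) + ζ (the lift of R_ζ ∘ F). Then for every n ≥ 1 the iterate G^n(0) is defined, lies in Π_ε, and satisfies Im G^n(0) ≥ Im ζ > 0; consequently 0 is not an accumulation point of its own forward orbit under G. -/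
/-!
The real trace `x ↦ Re F x` is a continuous degree-one circle lift, hence onto `ℝ`; with
injectivity this shows that `F` takes no real value off the real line, so `Im F` has constant
sign on the connected upper half-strip. Were it negative, `t ↦ Im F (x + i t)` would decrease
from `0` at every real `x`; by Cauchy–Riemann its derivative at `t = 0` is `(Re F)'(x)`, so the
real trace would be antitone. For the orbit, this sign condition makes `G = F + ζ` map
`{Im ζ ≤ Im w < ε}` into itself, and `G 0 = F 0 + ζ` lies in that set.
-/

open Filter Set

open Topology Complex Function

theorem isOpen_strip (ε : ℝ) : IsOpen (Strip ε) :=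
  isOpen_lt (by fun_prop) continuous_const

theorem ofReal_mem_strip {ε : ℝ} (hε : 0 < ε) (x : ℝ) : (x : ℂ) ∈ Strip ε := by
  simpa [Strip] using hε

theorem mem_strip_of_im_mem_Ioo {ε : ℝ} {z : ℂ} (h : z.im ∈ Ioo 0 ε) : z ∈ Strip ε :=
  abs_lt.2 ⟨by linarith [h.1, h.2], h.2⟩

theorem Function.Surjective.of_continuous_of_monotone_of_map_add_one {f : ℝ → ℝ}
    (hc : Continuous f) (hm : Monotone f) (h1 : ∀ x, f (x + 1) = f x + 1) : Surjective f :=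
  (CircleDeg1Lift.continuous_iff_surjective ⟨⟨f, hm⟩, h1⟩).1 hc

theorem HasDerivAt.nonpos_of_eventually_le_right {g : ℝ → ℝ} {g' x : ℝ} (hg : HasDerivAt g g' x)
    (hle : ∀ᶠ t in 𝓝[>] 0, g (x + t) ≤ g x) : g' ≤ 0 :=
  le_of_tendsto hg.tendsto_slope_zero_right <| by
    filter_upwards [hle, self_mem_nhdsWithin] with t ht (htpos : 0 < t)
    exact smul_nonpos_of_nonneg_of_nonpos (inv_nonneg.2 htpos.le) (sub_nonpos.2 ht)

theorem HasDerivAt.im_comp_add_mul_I {F : ℂ → ℂ} {c z : ℂ} (hF : HasDerivAt F c z) :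
    HasDerivAt (fun t : ℝ => (F (z + t * I)).im) c.re 0 := by
  have hline : HasDerivAt (fun w : ℂ => z + w * I) I 0 := by
    simpa using ((hasDerivAt_id (0 : ℂ)).mul_const I).const_add z
  have hrot : HasDerivAt (fun w : ℂ => -I * F (z + w * I)) c 0 := by
    refine ((hF.comp_of_eq 0 hline (by simp)).const_mul (-I)).congr_deriv ?_
    linear_combination -c * I_sq
  simpa using hrot.real_of_complex

theorem IsPreconnected.neg_of_neg_of_ne_zero {X : Type*} [TopologicalSpace X] {U : Set X}
    {g : X → ℝ} (hU : IsPreconnected U) (hg : ContinuousOn g U) (hne : ∀ w ∈ U, g w ≠ 0)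
    {z w : X} (hz : z ∈ U) (hw : w ∈ U) (hgz : g z < 0) : g w < 0 := by
  by_contra! hgw
  obtain ⟨u, hu, hgu⟩ := hU.intermediate_value hz hw hg ⟨hgz.le, hgw⟩
  exact hne u hu hgu

theorem im_eq_zero_of_im_apply_eq_zero {F : ℂ → ℂ} {S : Set ℂ} (hS : ∀ x : ℝ, (x : ℂ) ∈ S)
    (hinj : InjOn F S) (hreal : ∀ x : ℝ, (F x).im = 0)
    (hsurj : Surjective fun x : ℝ => (F x).re) {z : ℂ} (hz : z ∈ S) (hFz : (F z).im = 0) :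
    z.im = 0 := by
  obtain ⟨x, hx⟩ := hsurj (F z).re
  have : F x = F z := Complex.ext hx (by rw [hreal, hFz])
  simp [← hinj (hS x) hz this]

theorem im_apply_nonneg_of_im_mem_Ioo {ε : ℝ} (hε : 0 < ε) {F : ℂ → ℂ}
    (hF : DifferentiableOn ℂ F (Strip ε)) (hinj : InjOn F (Strip ε))
    (hper : ∀ z ∈ Strip ε, F (z + 1) = F z + 1) (hreal : ∀ x : ℝ, (F x).im = 0)
    (hmono : StrictMono fun x : ℝ => (F x).re) {z : ℂ} (hz : z.im ∈ Ioo 0 ε) :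
    0 ≤ (F z).im := by
  have hderiv (x : ℝ) : HasDerivAt F (deriv F x) x :=
    (hF.differentiableAt ((isOpen_strip ε).mem_nhds (ofReal_mem_strip hε x))).hasDerivAt
  have hsurj : Surjective fun x : ℝ => (F x).re := by
    refine .of_continuous_of_monotone_of_map_add_one
      (continuous_iff_continuousAt.2 fun x => (hderiv x).real_of_complex.continuousAt)
      hmono.monotone fun x => ?_
    simpa using congr_arg re (hper x (ofReal_mem_strip hε x))
  have hne : ∀ w ∈ im ⁻¹' Ioo 0 ε, (F w).im ≠ 0 := fun w hw hFw =>
    hw.1.ne' <| im_eq_zero_of_im_apply_eq_zero (ofReal_mem_strip hε) hinj hreal hsurj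
      (mem_strip_of_im_mem_Ioo hw) hFw
  have hU : IsPreconnected (im ⁻¹' Ioo 0 ε) :=
    ((convex_Ioo 0 ε).linear_preimage imLm).isPreconnected
  have hcont : ContinuousOn (fun w => (F w).im) (im ⁻¹' Ioo 0 ε) :=
    continuous_im.comp_continuousOn (hF.continuousOn.mono fun _ => mem_strip_of_im_mem_Ioo)
  by_contra! hneg
  have hre (x : ℝ) : deriv (fun x : ℝ => (F x).re) x ≤ 0 := by
    rw [(hderiv x).real_of_complex.deriv]
    refine (hderiv x).im_comp_add_mul_I.nonpos_of_eventually_le_right ?_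
    filter_upwards [Ioo_mem_nhdsGT hε] with t ht
    simpa [hreal] using (hU.neg_of_neg_of_ne_zero hcont hne hz (by simpa using ht) hneg).le
  have hanti := antitone_of_deriv_nonpos (fun x => (hderiv x).real_of_complex.differentiableAt) hre
  exact (hmono zero_lt_one).not_ge (hanti zero_le_one)

theorem mapsTo_add_const_im_Ico {ε ε' : ℝ} {F : ℂ → ℂ} {ζ : ℂ}
    (hup : ∀ z : ℂ, z.im ∈ Ioo 0 ε → 0 ≤ (F z).im) (hstrip : ∀ z ∈ Strip ε, F z ∈ Strip ε')
    (hζ : 0 < ζ.im) (hsum : ε' + ζ.im ≤ ε) :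
    MapsTo (fun z => F z + ζ) (im ⁻¹' Ico ζ.im ε) (im ⁻¹' Ico ζ.im ε) := by
  intro w hw
  have hwU : w.im ∈ Ioo 0 ε := ⟨hζ.trans_le hw.1, hw.2⟩
  have hFw : (F w).im < ε' := lt_of_abs_lt (hstrip w (mem_strip_of_im_mem_Ioo hwU))
  simp only [mem_preimage, add_im, mem_Ico]
  constructor <;> linarith [hup w hwU]

/-- A real-symmetric univalent circle-map lift maps the open upper half-strip into the
closed upper half-plane; and after composing with a rotation `R_ζ`, `Im ζ > 0`, the orbit
of `0` stays in the strip with imaginary part at least `Im ζ`, hence `0` does not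
accumulate on its own forward orbit. -/
theorem upper_strip_invariance_and_orbit (ε : ℝ) (hε : 0 < ε) (F : ℂ → ℂ)
    (hF : DifferentiableOn ℂ F (Strip ε)) (hinj : Set.InjOn F (Strip ε))
    (hper : ∀ z ∈ Strip ε, F (z + 1) = F z + 1)
    (hreal : ∀ x : ℝ, (F (x : ℂ)).im = 0)
    (hmono : StrictMono fun x : ℝ => (F (x : ℂ)).re) :
    (∀ z : ℂ, 0 < z.im → z.im < ε → 0 ≤ (F z).im) ∧
    (∀ ε' : ℝ, 0 < ε' → (∀ z ∈ Strip ε, F z ∈ Strip ε') →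
      ∀ ζ : ℂ, 0 < ζ.im → ε' + ζ.im ≤ ε →
        (∀ n : ℕ, 1 ≤ n →
          (fun z => F z + ζ)^[n] 0 ∈ Strip ε ∧ ζ.im ≤ ((fun z => F z + ζ)^[n] 0).im) ∧
        ∃ δ > (0:ℝ), ∀ n : ℕ, 1 ≤ n → δ ≤ ‖(fun z => F z + ζ)^[n] 0‖) := by
  have hup (z : ℂ) (hz : z.im ∈ Ioo 0 ε) : 0 ≤ (F z).im :=
    im_apply_nonneg_of_im_mem_Ioo hε hF hinj hper hreal hmono hz
  refine ⟨fun z h0 h1 => hup z ⟨h0, h1⟩, fun ε' _ hstrip ζ hζ hsum => ?_⟩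
  have horbit (n : ℕ) (hn : 1 ≤ n) : (fun z => F z + ζ)^[n] 0 ∈ im ⁻¹' Ico ζ.im ε := by
    obtain ⟨m, rfl⟩ := Nat.exists_eq_add_of_le' hn
    rw [iterate_succ_apply]
    have hG0 : (F 0 + ζ).im = ζ.im := by simpa using hreal 0
    refine (mapsTo_add_const_im_Ico hup hstrip hζ hsum).iterate m ?_
    simp only [mem_preimage, hG0, mem_Ico]
    exact ⟨le_rfl, by linarith⟩
  refine ⟨fun n hn => ⟨mem_strip_of_im_mem_Ioo ⟨hζ.trans_le (horbit n hn).1, (horbit n hn).2⟩,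
    (horbit n hn).1⟩, ζ.im, hζ, fun n hn => ?_⟩
  exact (horbit n hn).1.trans ((le_abs_self _).trans (abs_im_le_norm _))
end
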